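/- arXiv:2510.26147 — 4 statements merged into one kernel-verified Lean document; each statement's English description precedes it below -/
import Mathlib

section
/- With α* as the minimizer of the beampattern MSE, the minimal value satisfies min_α (1/Q)·Σ_q |α d(θ_q) − a(θ_q)^H R a(θ_q)|² = (1/Q)·Σ_q ⟨R, M_q⟩², where M_q = (d(θ_q)·Σ_{q'} d(θ_{q'}) a(θ_{q'}) a(θ_{q'})^H) / (Σ_{q'} d(θ_{q'})²) − a(θ_q) a(θ_q)^H and ⟨A,B⟩ = Re tr(A B^H). -/
open Matrix Finset ComplexOrder

/-- at the optimal scaling `α*`, the minimal beampattern MSE equals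
`(1/Q)·Σ_q ⟨R, M_q⟩²`, where `⟨A,B⟩ = Re tr(A Bᴴ)` and
`M_q = (d_q · Σ_{q'} d_{q'} a_{q'} a_{q'}ᴴ)/(Σ_{q'} d_{q'}²) − a_q a_qᴴ`. -/
theorem beampattern_mse_min_value
    (M Q : ℕ) (hQ : 1 ≤ Q)
    (R : Matrix (Fin M) (Fin M) ℂ) (hR : R.PosSemidef)
    (a : Fin Q → (Fin M → ℂ)) (d : Fin Q → ℝ)
    (hd : 0 < ∑ q, (d q) ^ 2) :
    (1 / (Q : ℝ)) * ∑ q, ‖(((∑ q', d q' *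
          (star (a q') ⬝ᵥ R.mulVec (a q')).re) / (∑ q', (d q') ^ 2) : ℝ) * d q : ℂ)
        - star (a q) ⬝ᵥ R.mulVec (a q)‖ ^ 2
    = (1 / (Q : ℝ)) * ∑ q,
        ((R * ((((d q / (∑ q', (d q') ^ 2) : ℝ) : ℂ) •
            ∑ q', ((d q' : ℝ) : ℂ) • vecMulVec (a q') (star (a q'))) -
            vecMulVec (a q) (star (a q)))ᴴ).trace).re ^ 2 := by
  have hherm := hR.isHermitian
  have hreal : ∀ q, star (a q) ⬝ᵥ R.mulVec (a q)
      = (((star (a q) ⬝ᵥ R.mulVec (a q)).re : ℝ) : ℂ) := by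
    intro q
    have h1 : star (a q) ⬝ᵥ R.mulVec (a q) = star (star (a q) ⬝ᵥ R.mulVec (a q)) := by
      conv_lhs => rw [star_dotProduct]
      rw [star_mulVec, hherm.eq, dotProduct_mulVec]
    exact (Complex.conj_eq_iff_re.mp h1.symm).symm
  set b : Fin Q → ℝ := fun q => (star (a q) ⬝ᵥ R.mulVec (a q)).re with hb
  have hvmv : ∀ q, (vecMulVec (a q) (star (a q)))ᴴ = vecMulVec (a q) (star (a q)) := by
    intro q; ext i j
    simp [vecMulVec_apply, conjTranspose_apply, mul_comm]
  have htr : ∀ q, (R * vecMulVec (a q) (star (a q))).trace = star (a q) ⬝ᵥ R.mulVec (a q) := by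
    intro q
    simp only [Matrix.trace, Matrix.diag_apply, Matrix.mul_apply, vecMulVec_apply,
      dotProduct, mulVec, Pi.star_apply, Finset.mul_sum]
    apply Finset.sum_congr rfl; intro i _
    apply Finset.sum_congr rfl; intro j _
    ring
  congr 1
  apply Finset.sum_congr rfl
  intro q _
  have hRe : ((R * ((((d q / (∑ q', (d q') ^ 2) : ℝ) : ℂ) •
            ∑ q', ((d q' : ℝ) : ℂ) • vecMulVec (a q') (star (a q'))) -
            vecMulVec (a q) (star (a q)))ᴴ).trace).re
      = (d q / (∑ q', (d q') ^ 2)) * (∑ q', d q' * b q') - b q := by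
    rw [conjTranspose_sub, conjTranspose_smul, conjTranspose_sum]
    simp only [conjTranspose_smul, hvmv, Complex.star_def, Complex.conj_ofReal]
    rw [Matrix.mul_sub, Matrix.trace_sub, Matrix.mul_smul, Matrix.trace_smul,
      Matrix.mul_sum, Matrix.trace_sum]
    have htr' : ∀ p, (R * vecMulVec (a p) (star (a p))).trace = ((b p : ℝ) : ℂ) :=
      fun p => (htr p).trans (hreal p)
    simp only [Matrix.mul_smul, Matrix.trace_smul, htr', smul_eq_mul]
    push_cast
    simp
    left
    norm_cast
  rw [hRe, hreal q]
  rw [← Complex.ofReal_mul, ← Complex.ofReal_sub, Complex.norm_real, Real.norm_eq_abs, sq_abs]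
  ring
end

section
/- Let f(Λ, λ, μ) = −tr(Λ) − μc subject to the constraint that the real symmetric block matrix [[Λ, λ],[λ^T, μ]] is positive semidefinite, with λ ∈ ℝ^Q fixed and c > 0. Then sup over feasible (Λ, μ) of f equals −2√c·‖λ‖, attained (when λ ≠ 0) at μ = ‖λ‖/√c and Λ = μ^{-1} λλ^T. -/
/-! Every 2 × 2 principal minor of `[[Λ, λ], [λᵀ, μ]]` is nonnegative, so `λ_q² ≤ Λ_qq μ`, and
summing gives `‖λ‖² ≤ tr(Λ) μ`. By AM–GM, `tr Λ + μ c ≥ 2 √(tr Λ · μ c) ≥ 2 √c ‖λ‖`. Equality holds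
at `μ = ‖λ‖ / √c`, `Λ = μ⁻¹ λλᵀ`, where the block matrix is the rank-one matrix `μ⁻¹ w wᵀ` with
`w = (λ, μ)`. -/

open Matrix Finset

namespace Matrix

variable {m : Type*}

def bordered (Λ : Matrix m m ℝ) (l : m → ℝ) (μ : ℝ) : Matrix (m ⊕ Fin 1) (m ⊕ Fin 1) ℝ :=
  fromBlocks Λ (of fun i (_ : Fin 1) => l i) (of fun (_ : Fin 1) j => l j)
    (of fun (_ : Fin 1) (_ : Fin 1) => μ)

variable {Λ : Matrix m m ℝ} {l : m → ℝ} {μ : ℝ}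

theorem PosSemidef.sq_le_diag_mul_of_bordered (h : (bordered Λ l μ).PosSemidef) (i : m) :
    l i ^ 2 ≤ Λ i i * μ := by
  have := (h.submatrix ![Sum.inl i, Sum.inr 0]).det_nonneg
  rw [det_fin_two] at this
  simpa [bordered, sq] using this

theorem PosSemidef.sum_sq_le_trace_mul_of_bordered [Fintype m]
    (h : (bordered Λ l μ).PosSemidef) :
    ∑ i, l i ^ 2 ≤ Λ.trace * μ := by
  rw [trace, sum_mul]
  exact sum_le_sum fun i _ => h.sq_le_diag_mul_of_bordered i

theorem PosSemidef.trace_nonneg_of_bordered [Fintype m] (h : (bordered Λ l μ).PosSemidef) :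
    0 ≤ Λ.trace :=
  (h.submatrix Sum.inl).trace_nonneg

theorem bordered_inv_smul_vecMulVec (l : m → ℝ) (hμ : μ ≠ 0) :
    bordered (μ⁻¹ • vecMulVec l l) l μ =
      μ⁻¹ • vecMulVec (Sum.elim l fun _ => μ) (Sum.elim l fun _ => μ) := by
  ext (i | i) (j | j) <;> simp [bordered, vecMulVec_apply, hμ]
  field_simp

theorem posSemidef_bordered_inv_smul_vecMulVec [Finite m] (l : m → ℝ) (hμ : 0 < μ) :
    (bordered (μ⁻¹ • vecMulVec l l) l μ).PosSemidef := by
  rw [bordered_inv_smul_vecMulVec l hμ.ne']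
  exact (posSemidef_vecMulVec_self_star _).smul (inv_nonneg.2 hμ.le)

end Matrix

theorem two_sqrt_mul_sqrt_le_add_of_le_mul {s t μ c : ℝ} (ht : 0 ≤ t) (hμ : 0 ≤ μ) (hc : 0 ≤ c)
    (hs : s ≤ t * μ) : 2 * √c * √s ≤ t + μ * c := by
  calc 2 * √c * √s ≤ 2 * √c * (√t * √μ) := by
        rw [← Real.sqrt_mul ht]; gcongr
    _ = 2 * √t * (√μ * √c) := by ring
    _ ≤ √t ^ 2 + (√μ * √c) ^ 2 := two_mul_le_add_sq _ _
    _ = t + μ * c := by rw [mul_pow, Real.sq_sqrt ht, Real.sq_sqrt hμ, Real.sq_sqrt hc]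

theorem two_sqrt_mul_sqrt_eq_inv_mul_add_mul {s c : ℝ} (hs : 0 ≤ s) (hc : 0 < c) :
    2 * √c * √s = (√s / √c)⁻¹ * s + √s / √c * c := by
  rcases hs.eq_or_lt with rfl | hs
  · simp
  have := Real.sqrt_pos.2 hs
  have := Real.sqrt_pos.2 hc
  field_simp
  rw [Real.sq_sqrt hs.le, Real.sq_sqrt hc.le]; ring

/-- maximizing `−tr(Λ) − μc` over real symmetric `Λ` and `μ ≥ 0` with
`[[Λ, λ],[λᵀ, μ]] ⪰ 0` yields the value `−2√c·‖λ‖`, attained (for `λ ≠ 0`) at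
`μ = ‖λ‖/√c` and `Λ = μ⁻¹ λλᵀ`. -/
theorem dual_block_psd_sup
    (Q : ℕ) (c : ℝ) (hc : 0 < c) (l : Fin Q → ℝ) (hl : l ≠ 0) :
    IsGreatest
      {x : ℝ | ∃ (Λ : Matrix (Fin Q) (Fin Q) ℝ) (μ : ℝ), Λ.IsSymm ∧ 0 ≤ μ ∧
        (Matrix.fromBlocks Λ
          (Matrix.of fun q (_ : Fin 1) => l q)
          (Matrix.of fun (_ : Fin 1) q => l q)
          (Matrix.of fun (_ : Fin 1) (_ : Fin 1) => μ)).PosSemidef ∧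
        x = -Λ.trace - μ * c}
      (-2 * Real.sqrt c * Real.sqrt (∑ q, (l q) ^ 2)) ∧
    -((Real.sqrt (∑ q, (l q) ^ 2) / Real.sqrt c)⁻¹ •
        vecMulVec l l : Matrix (Fin Q) (Fin Q) ℝ).trace
      - (Real.sqrt (∑ q, (l q) ^ 2) / Real.sqrt c) * c
      = -2 * Real.sqrt c * Real.sqrt (∑ q, (l q) ^ 2) := by
  set s := ∑ q, l q ^ 2
  have hs_eq : l ⬝ᵥ l = s := by simp only [s, dotProduct, sq]
  have hs : 0 < s := hs_eq ▸ dotProduct_star_self_pos_iff.2 hl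
  have hμ₀ : 0 < √s / √c := div_pos (Real.sqrt_pos.2 hs) (Real.sqrt_pos.2 hc)
  have hvalue : -((√s / √c)⁻¹ • vecMulVec l l).trace - √s / √c * c = -2 * √c * √s := by
    rw [trace_smul, trace_vecMulVec, hs_eq, smul_eq_mul]
    linarith [two_sqrt_mul_sqrt_eq_inv_mul_add_mul hs.le hc]
  refine ⟨⟨⟨_, _, IsSymm.smul (transpose_vecMulVec l l) _, hμ₀.le,
    posSemidef_bordered_inv_smul_vecMulVec l hμ₀, hvalue.symm⟩, ?_⟩, hvalue⟩
  rintro _ ⟨Λ, μ, -, hμ, hpsd, rfl⟩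
  have := two_sqrt_mul_sqrt_le_add_of_le_mul hpsd.trace_nonneg_of_bordered hμ hc.le
    hpsd.sum_sq_le_trace_mul_of_bordered
  linarith
end

section
/- (Yates framework, monotone convergence from below.) Let J be a standard interference function on ℝ_+^K with fixed point β*. If β^{(0)} ≤ J(β^{(0)}) componentwise (in particular β^{(0)} = 0), then the iterates β^{(i+1)} = J(β^{(i)}) are componentwise nondecreasing, bounded above by β*, and converge to β*. -/
open Filter

/-- Auxiliary: any `β ≥ 0` with `β ≤ J β` is `≤` any positive fixed point `γ`. -/
lemma yates_sub_fixed_le {K : ℕ} (hK : 0 < K) (J : (Fin K → ℝ) → (Fin K → ℝ))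
    (hmono : ∀ β β' : Fin K → ℝ, 0 ≤ β → β ≤ β' → J β ≤ J β')
    (hscal : ∀ ρ : ℝ, 1 < ρ → ∀ β : Fin K → ℝ, 0 ≤ β →
      ∀ k, J (ρ • β) k < ρ * J β k)
    (γ : Fin K → ℝ) (hγpos : ∀ k, 0 < γ k) (hγfix : J γ = γ)
    (β : Fin K → ℝ) (hβ0 : 0 ≤ β) (hβ : β ≤ J β) : β ≤ γ := by
  haveI : Nonempty (Fin K) := ⟨⟨0, hK⟩⟩
  set ρ := Finset.univ.sup' Finset.univ_nonempty (fun k => β k / γ k) with hρdef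
  obtain ⟨k0, -, hk0⟩ :=
    Finset.exists_mem_eq_sup' (Finset.univ_nonempty (α := Fin K)) (fun k => β k / γ k)
  by_cases hρ : ρ ≤ 1
  · intro k
    have h1 : β k / γ k ≤ ρ := Finset.le_sup' (fun k => β k / γ k) (Finset.mem_univ k)
    have := (div_le_one (hγpos k)).mp (le_trans h1 hρ)
    linarith
  · exfalso
    push_neg at hρ
    have hle : β ≤ ρ • γ := by
      intro k
      have h1 : β k / γ k ≤ ρ := Finset.le_sup' (fun k => β k / γ k) (Finset.mem_univ k)
      have h2 : β k / γ k * γ k ≤ ρ * γ k :=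
        mul_le_mul_of_nonneg_right h1 (hγpos k).le
      rwa [div_mul_cancel₀ _ (hγpos k).ne'] at h2
    have h3 : β k0 ≤ J β k0 := hβ k0
    have h4 : J β k0 ≤ J (ρ • γ) k0 := hmono β (ρ • γ) hβ0 hle k0
    have h5 : J (ρ • γ) k0 < ρ * J γ k0 :=
      hscal ρ hρ γ (fun k => (hγpos k).le) k0
    have h6 : ρ * J γ k0 = β k0 := by
      rw [hγfix, hρdef, hk0, div_mul_cancel₀ _ (hγpos k0).ne']
    linarith

/-- Yates framework, monotone convergence from below: for a standard
interference function `J` with fixed point `β*`, the iterates started from any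
`β^{(0)} ≥ 0` with `β^{(0)} ≤ J(β^{(0)})` are nondecreasing, bounded above by `β*`,
and converge to `β*`. -/
theorem yates_convergence_from_below
    (K : ℕ) (J : (Fin K → ℝ) → (Fin K → ℝ))
    (hpos : ∀ β : Fin K → ℝ, 0 ≤ β → ∀ k, 0 < J β k)
    (hmono : ∀ β β' : Fin K → ℝ, 0 ≤ β → β ≤ β' → J β ≤ J β')
    (hscal : ∀ ρ : ℝ, 1 < ρ → ∀ β : Fin K → ℝ, 0 ≤ β →
      ∀ k, J (ρ • β) k < ρ * J β k)
    (βstar : Fin K → ℝ) (hβstar : 0 ≤ βstar) (hfix : J βstar = βstar)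
    (seq : ℕ → (Fin K → ℝ)) (hinit0 : 0 ≤ seq 0) (hinit : seq 0 ≤ J (seq 0))
    (hiter : ∀ i, seq (i + 1) = J (seq i)) :
    (∀ i, seq i ≤ seq (i + 1)) ∧
    (∀ i, seq i ≤ βstar) ∧
    Tendsto seq atTop (nhds βstar) := by
  rcases Nat.eq_zero_or_pos K with hK | hK
  · subst hK
    haveI : Subsingleton (Fin 0 → ℝ) := ⟨fun f g => funext fun k => k.elim0⟩
    refine ⟨fun i => le_of_eq (Subsingleton.elim _ _),
      fun i => le_of_eq (Subsingleton.elim _ _), ?_⟩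
    have : seq = fun _ => βstar := funext fun i => Subsingleton.elim _ _
    rw [this]; exact tendsto_const_nhds
  -- nonnegativity of iterates
  have hnn : ∀ i, 0 ≤ seq i := by
    intro i
    induction i with
    | zero => exact hinit0
    | succ n ih => rw [hiter]; exact fun k => (hpos (seq n) ih k).le
  -- monotonicity of iterates
  have hmonoseq : ∀ i, seq i ≤ seq (i + 1) := by
    intro i
    induction i with
    | zero => rw [hiter 0]; exact hinit
    | succ n ih =>
      calc seq (n + 1) = J (seq n) := hiter n
        _ ≤ J (seq (n + 1)) := hmono (seq n) (seq (n + 1)) (hnn n) ih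
        _ = seq (n + 2) := (hiter (n + 1)).symm
  have hmonoseq' : ∀ k, Monotone (fun i => seq i k) :=
    fun k => monotone_nat_of_le_succ (fun n => hmonoseq n k)
  -- positivity of the fixed point
  have hβpos : ∀ k, 0 < βstar k := by
    intro k; have := hpos βstar hβstar k; rwa [hfix] at this
  -- bounded above by βstar
  have hbound : ∀ i, seq i ≤ βstar := by
    intro i
    induction i with
    | zero => exact yates_sub_fixed_le hK J hmono hscal βstar hβpos hfix (seq 0) hinit0 hinit
    | succ n ih =>
      rw [hiter n]
      calc J (seq n) ≤ J βstar := hmono (seq n) βstar (hnn n) ih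
        _ = βstar := hfix
  refine ⟨hmonoseq, hbound, ?_⟩
  -- the limit
  have hbdd : ∀ k, BddAbove (Set.range fun i => seq i k) := by
    intro k; exact ⟨βstar k, by rintro x ⟨i, rfl⟩; exact hbound i k⟩
  set L : Fin K → ℝ := fun k => ⨆ i, seq i k with hLdef
  have hseqL : ∀ i, seq i ≤ L := fun i k => le_ciSup (hbdd k) i
  have htend : ∀ k, Tendsto (fun i => seq i k) atTop (nhds (L k)) :=
    fun k => tendsto_atTop_ciSup (hmonoseq' k) (hbdd k)
  have hL0 : 0 ≤ L := fun k => le_trans (hnn 0 k) (hseqL 0 k)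
  have hLβ : L ≤ βstar := fun k => ciSup_le fun i => hbound i k
  have hLpos : ∀ k, 0 < L k := by
    intro k
    have h1 : 0 < seq 1 k := by rw [hiter 0]; exact hpos (seq 0) hinit0 k
    exact lt_of_lt_of_le h1 (hseqL 1 k)
  -- L ≤ J L
  have hLJL : L ≤ J L := by
    intro k
    refine ciSup_le fun i => ?_
    calc seq i k ≤ seq (i + 1) k := hmonoseq i k
      _ = J (seq i) k := by rw [hiter i]
      _ ≤ J L k := hmono (seq i) L (hnn i) (hseqL i) k
  -- key: ∀ ρ > 1, J L ≤ ρ • L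
  have key : ∀ ρ : ℝ, 1 < ρ → ∀ k, J L k ≤ ρ * L k := by
    intro ρ hρ
    have hρ0 : (0:ℝ) < ρ := lt_trans one_pos hρ
    have hev : ∀ᶠ n in atTop, ∀ k, L k / ρ < seq n k := by
      rw [eventually_all]
      intro k
      apply (htend k).eventually (eventually_gt_nhds ?_)
      rw [div_lt_iff₀ hρ0]
      nlinarith [hLpos k]
    obtain ⟨n, hn⟩ := hev.exists
    intro k
    have hle : L ≤ ρ • seq n := by
      intro j
      have := hn j
      rw [div_lt_iff₀ hρ0] at this
      simpa [Pi.smul_apply, smul_eq_mul, mul_comm] using this.le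
    have h4 : J L k ≤ J (ρ • seq n) k := hmono L (ρ • seq n) hL0 hle k
    have h5 : J (ρ • seq n) k < ρ * J (seq n) k := hscal ρ hρ (seq n) (hnn n) k
    have h6 : J (seq n) k ≤ L k := by rw [← hiter n]; exact hseqL (n + 1) k
    nlinarith
  have hJLL : J L ≤ L := by
    intro k
    by_contra h
    push_neg at h
    set b := L k with hb
    set a := J L k with ha
    have hb0 : 0 < b := hLpos k
    have hρ1 : 1 < (a + b) / (2 * b) := by
      rw [lt_div_iff₀ (by linarith)]; linarith
    have := key _ hρ1 k
    rw [div_mul_eq_mul_div, mul_comm (2:ℝ) b, ← div_div,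
      mul_div_assoc, div_self hb0.ne'] at this
    linarith
  have hJLfix : J L = L := le_antisymm hJLL hLJL
  -- βstar ≤ L via uniqueness direction
  have hβL : βstar ≤ L :=
    yates_sub_fixed_le hK J hmono hscal L hLpos hJLfix βstar hβstar (le_of_eq hfix.symm)
  have hLeq : L = βstar := le_antisymm hLβ hβL
  rw [tendsto_pi_nhds]
  intro k
  rw [← hLeq]
  exact htend k
end

section
/- Let A ≻ 0 Hermitian and h ≠ 0, and suppose tr(V(A − t·h h^H)) = 0 for some Hermitian V ⪰ 0, V ≠ 0, where A ⪰ t·h h^H and t = (h^H A^{-1} h)^{-1}. Then V is a nonnegative multiple of ṽṽ^H with ṽ = A^{-1}h/‖A^{-1}h‖; in particular rank(V) ≤ 1. -/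
open Matrix ComplexOrder

lemma aux_trace_conjTranspose_mul_self_zero {m : ℕ} (C : Matrix (Fin m) (Fin m) ℂ)
    (h0 : (Cᴴ * C).trace = 0) : C = 0 := by
  have h2 : (Cᴴ * C).trace = ((∑ j, ∑ k, Complex.normSq (C k j) : ℝ) : ℂ) := by
    simp only [Matrix.trace, Matrix.diag, Matrix.mul_apply, Matrix.conjTranspose_apply]
    push_cast
    refine Finset.sum_congr rfl fun j _ => Finset.sum_congr rfl fun k _ => ?_
    rw [Complex.normSq_eq_conj_mul_self]
    rfl
  rw [h2] at h0
  have h1 : ∑ j, ∑ k, Complex.normSq (C k j) = 0 := by exact_mod_cast h0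
  ext i j
  have hj := (Finset.sum_eq_zero_iff_of_nonneg (fun j _ =>
      Finset.sum_nonneg fun k _ => Complex.normSq_nonneg _)).mp h1 j (Finset.mem_univ j)
  have hk := (Finset.sum_eq_zero_iff_of_nonneg (fun k _ =>
      Complex.normSq_nonneg _)).mp hj i (Finset.mem_univ i)
  simpa using Complex.normSq_eq_zero.mp hk

lemma aux_vecMulVec_mulVec {m : ℕ} (w v x : Fin m → ℂ) :
    (vecMulVec w v).mulVec x = (v ⬝ᵥ x) • w := by
  ext i
  simp [Matrix.mulVec, Matrix.vecMulVec_apply, dotProduct, Finset.sum_mul, Finset.mul_sum]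
  ring_nf

open scoped MatrixOrder in
lemma aux_sqrt {m : ℕ} (X : Matrix (Fin m) (Fin m) ℂ) (hX : X.PosSemidef) :
    ∃ S : Matrix (Fin m) (Fin m) ℂ, Sᴴ = S ∧ S * S = X :=
  ⟨CFC.sqrt X, (CFC.sqrt_nonneg X).posSemidef.1, CFC.sqrt_mul_sqrt_self X hX.nonneg⟩

/-- rank-one recovery from complementary slackness: with `A ≻ 0`,
`h ≠ 0`, `t = (hᴴ A⁻¹ h)⁻¹`, `A ⪰ t·h hᴴ`, any Hermitian `V ⪰ 0`, `V ≠ 0` with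
`tr(V(A − t h hᴴ)) = 0` is a nonnegative multiple of `ṽ ṽᴴ`, where
`ṽ = A⁻¹h/‖A⁻¹h‖`; in particular `rank(V) ≤ 1`. -/
theorem comp_slack_rank_one
    (M : ℕ) (A : Matrix (Fin M) (Fin M) ℂ) (hA : A.PosDef)
    (h : Fin M → ℂ) (hh : h ≠ 0)
    (t : ℝ) (ht : t = ((star h ⬝ᵥ A⁻¹.mulVec h).re)⁻¹)
    (hApsd : (A - ((t : ℝ) : ℂ) • vecMulVec h (star h)).PosSemidef)
    (V : Matrix (Fin M) (Fin M) ℂ) (hV : V.PosSemidef) (hV0 : V ≠ 0)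
    (hslack : (V * (A - ((t : ℝ) : ℂ) • vecMulVec h (star h))).trace = 0) :
    (∃ p : ℝ, 0 ≤ p ∧
      V = ((p : ℝ) : ℂ) •
        vecMulVec
          ((Real.sqrt ((star (A⁻¹.mulVec h) ⬝ᵥ (A⁻¹.mulVec h)).re))⁻¹ •
            A⁻¹.mulVec h)
          (star ((Real.sqrt ((star (A⁻¹.mulVec h) ⬝ᵥ (A⁻¹.mulVec h)).re))⁻¹ •
            A⁻¹.mulVec h))) ∧
    V.rank ≤ 1 := by
  set u : Fin M → ℂ := A⁻¹.mulVec h with hu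
  set B : Matrix (Fin M) (Fin M) ℂ := A - ((t : ℝ) : ℂ) • vecMulVec h (star h) with hBdef
  have hdet : IsUnit A.det := isUnit_iff_ne_zero.mpr (by exact_mod_cast hA.det_pos.ne')
  have hAu : A.mulVec u = h := by
    rw [hu, Matrix.mulVec_mulVec, Matrix.mul_nonsing_inv A hdet, Matrix.one_mulVec]
  have hu0 : u ≠ 0 := by
    intro hz
    apply hh
    rw [← hAu, hz, Matrix.mulVec_zero]
  -- s = hᴴ A⁻¹ h is a positive real
  have hs : 0 < star h ⬝ᵥ A⁻¹.mulVec h := hA.inv.dotProduct_mulVec_pos hh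
  set s : ℂ := star h ⬝ᵥ A⁻¹.mulVec h with hsdef
  have hsre : 0 < s.re := by
    have := hs
    rw [Complex.lt_def] at this
    exact this.1
  have hsim : s.im = 0 := by
    have := hs
    rw [Complex.lt_def] at this
    exact this.2.symm
  have hsreal : s = ((s.re : ℝ) : ℂ) := Complex.ext rfl (by simp [hsim])
  have hts : ((t : ℝ) : ℂ) * s = 1 := by
    rw [hsreal, ht]
    norm_cast
    simp [inv_mul_cancel₀ hsre.ne']
  -- kernel of B is spanned by u
  have hker : ∀ x : Fin M → ℂ, B.mulVec x = 0 →
      x = (((t : ℝ) : ℂ) * (star h ⬝ᵥ x)) • u := by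
    intro x hx
    have h1 : A.mulVec x = (((t : ℝ) : ℂ) * (star h ⬝ᵥ x)) • h := by
      have : A.mulVec x - ((t : ℝ) : ℂ) • ((star h ⬝ᵥ x) • h) = 0 := by
        rw [← aux_vecMulVec_mulVec h (star h) x]
        simpa [hBdef, Matrix.sub_mulVec, Matrix.smul_mulVec] using hx
      have := sub_eq_zero.mp this
      rw [this, smul_smul]
    have h2 : A⁻¹.mulVec (A.mulVec x) = x := by
      rw [Matrix.mulVec_mulVec, Matrix.nonsing_inv_mul A hdet, Matrix.one_mulVec]
    calc x = A⁻¹.mulVec (A.mulVec x) := h2.symm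
      _ = (((t : ℝ) : ℂ) * (star h ⬝ᵥ x)) • u := by rw [h1, Matrix.mulVec_smul]
  -- complementary slackness gives B * V = 0
  have hBV : B * V = 0 := by
    obtain ⟨SV, hSh, hS⟩ := aux_sqrt V hV
    obtain ⟨TB, hTh, hT⟩ := aux_sqrt B hApsd
    have key : TB * SV = 0 := by
      apply aux_trace_conjTranspose_mul_self_zero
      have : (TB * SV)ᴴ * (TB * SV)
          = SV * (TB * TB * SV) := by
        rw [Matrix.conjTranspose_mul, hSh, hTh]
        noncomm_ring
      rw [this, Matrix.trace_mul_comm, mul_assoc (TB * TB), hS, hT,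
        Matrix.trace_mul_comm]
      exact hslack
    have hBV' : TB * (TB * SV) * SV = B * V := by
      rw [← mul_assoc, mul_assoc (TB * TB), hS, hT]
    rw [← hBV', key, mul_zero, zero_mul]
  -- hence every column of V is a multiple of u
  set g : Fin M → ℂ := fun j => ((t : ℝ) : ℂ) * (star h ⬝ᵥ fun k => V k j) with hg
  have hcol : ∀ j, (fun k => V k j) = g j • u := by
    intro j
    apply hker
    ext i
    have : (B * V) i j = 0 := by rw [hBV]; rfl
    simpa [Matrix.mul_apply, Matrix.mulVec, dotProduct] using this
  have hVform : V = vecMulVec u g := by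
    ext i j
    have := congrFun (hcol j) i
    simp only [Pi.smul_apply, smul_eq_mul] at this
    rw [Matrix.vecMulVec_apply, this]
    ring
  -- Hermitian structure forces V = μ • u uᴴ
  obtain ⟨i0, hi0⟩ := Function.ne_iff.mp hu0
  have hi0' : u i0 ≠ 0 := hi0
  have hherm : ∀ i j, (starRingEnd ℂ) (u j) * (starRingEnd ℂ) (g i) = u i * g j := by
    intro i j
    have := congrFun (congrFun hV.1 i) j
    rw [hVform] at this
    simpa [Matrix.conjTranspose_apply, Matrix.vecMulVec_apply, mul_comm] using this
  set μ : ℂ := (starRingEnd ℂ) (g i0) / u i0 with hμ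
  have hgj : ∀ j, g j = μ * (starRingEnd ℂ) (u j) := by
    intro j
    have := hherm i0 j
    rw [hμ, div_mul_eq_mul_div, eq_div_iff hi0']
    linear_combination -this
  have hVμ : ∀ i j, V i j = μ * (u i * (starRingEnd ℂ) (u j)) := by
    intro i j
    rw [hVform, Matrix.vecMulVec_apply, hgj j]
    ring
  -- n = uᴴu is a positive real
  set n : ℂ := star u ⬝ᵥ u with hn
  set nr : ℝ := n.re with hnr
  have hnform : n = ∑ j, ((Complex.normSq (u j) : ℝ) : ℂ) := by
    simp only [hn, dotProduct, Pi.star_apply]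
    exact Finset.sum_congr rfl fun j _ => by
      rw [Complex.normSq_eq_conj_mul_self]; rfl
  have hnrpos : 0 < nr := by
    have hnre : nr = ∑ j, Complex.normSq (u j) := by
      rw [hnr, hnform]
      push_cast
      simp
    rw [hnre]
    apply Finset.sum_pos' (fun j _ => Complex.normSq_nonneg _)
    exact ⟨i0, Finset.mem_univ i0, Complex.normSq_pos.mpr hi0'⟩
  have hnim : n.im = 0 := by
    rw [hnform]
    simp
  have hnreal : n = ((nr : ℝ) : ℂ) := Complex.ext (by simp [hnr]) (by simp [hnim])
  -- μ is a nonneg real, via PSD applied to u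
  have hquad : 0 ≤ star u ⬝ᵥ V.mulVec u := hV.dotProduct_mulVec_nonneg u
  have hquadval : star u ⬝ᵥ V.mulVec u = μ * (n * n) := by
    have hmv : V.mulVec u = (μ * n) • u := by
      ext i
      simp only [Matrix.mulVec, dotProduct, Pi.smul_apply, smul_eq_mul]
      rw [show ∑ j, V i j * u j = μ * u i * ∑ j, (starRingEnd ℂ) (u j) * u j by
        rw [Finset.mul_sum]
        exact Finset.sum_congr rfl fun j _ => by rw [hVμ i j]; ring]
      simp only [hn, dotProduct, Pi.star_apply, Complex.star_def]
      ring_nf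
    rw [hmv]
    simp only [dotProduct, Pi.smul_apply, Pi.star_apply, smul_eq_mul, Complex.star_def]
    rw [show ∑ i, (starRingEnd ℂ) (u i) * (μ * n * u i)
        = μ * n * ∑ i, (starRingEnd ℂ) (u i) * u i by
      rw [Finset.mul_sum]; exact Finset.sum_congr rfl fun i _ => by ring]
    simp only [hn, dotProduct, Pi.star_apply, Complex.star_def]
    ring
  have hμre : 0 ≤ μ.re ∧ μ.im = 0 := by
    have hnn : 0 ≤ μ * (((nr : ℝ) : ℂ) * ((nr : ℝ) : ℂ)) := by
      rw [← hnreal]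
      exact hquadval ▸ hquad
    have h0 := Complex.nonneg_iff.mp hnn
    have hre' : (μ * (((nr : ℝ) : ℂ) * ((nr : ℝ) : ℂ))).re = μ.re * (nr * nr) := by
      rw [← Complex.ofReal_mul]
      simp [Complex.mul_re]
    have him' : (μ * (((nr : ℝ) : ℂ) * ((nr : ℝ) : ℂ))).im = μ.im * (nr * nr) := by
      rw [← Complex.ofReal_mul]
      simp [Complex.mul_im]
    constructor
    · have h1 := h0.1
      rw [hre'] at h1
      nlinarith [mul_pos hnrpos hnrpos]
    · have h2 : μ.im * (nr * nr) = 0 := by rw [← him']; exact h0.2.symm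
      rcases mul_eq_zero.mp h2 with h3 | h3
      · exact h3
      · exact absurd h3 (mul_pos hnrpos hnrpos).ne'
  have hμreal : μ = ((μ.re : ℝ) : ℂ) := Complex.ext rfl (by simp [hμre.2])
  constructor
  · refine ⟨μ.re * nr, mul_nonneg hμre.1 hnrpos.le, ?_⟩
    have hsqrt : (0:ℝ) < Real.sqrt nr := Real.sqrt_pos.mpr hnrpos
    have hsq : ((Real.sqrt nr : ℝ) : ℂ) * ((Real.sqrt nr : ℝ) : ℂ) = ((nr : ℝ) : ℂ) := by
      norm_cast
      exact Real.mul_self_sqrt hnrpos.le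
    have hsne : ((Real.sqrt nr : ℝ) : ℂ) ≠ 0 := by
      exact_mod_cast hsqrt.ne'
    ext i j
    rw [hVμ i j]
    have hst : star ((Real.sqrt nr)⁻¹ • u) = ((Real.sqrt nr)⁻¹ : ℝ) • star u := by
      ext k
      simp
    simp only [Matrix.smul_apply, Matrix.vecMulVec_apply, hst, Pi.smul_apply, Pi.star_apply,
      Complex.real_smul, smul_eq_mul, Complex.star_def]
    rw [hμreal]
    push_cast
    field_simp
    linear_combination ((μ.re : ℂ) * (u i * (starRingEnd ℂ) (u j))) * hsq
  · -- rank ≤ 1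
    have hrange : LinearMap.range V.mulVecLin ≤ Submodule.span ℂ {u} := by
      rintro y ⟨x, rfl⟩
      rw [Matrix.mulVecLin_apply, hVform, aux_vecMulVec_mulVec]
      exact Submodule.smul_mem _ _ (Submodule.mem_span_singleton_self u)
    calc V.rank = Module.finrank ℂ (LinearMap.range V.mulVecLin) := rfl
      _ ≤ Module.finrank ℂ (Submodule.span ℂ {u}) := Submodule.finrank_mono hrange
      _ ≤ 1 := by rw [finrank_span_singleton hu0]
end
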